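/- arXiv:2001.00037 — 3 statements merged into one kernel-verified Lean document; each statement's English description precedes it below -/
import Mathlib

section
/- Let H be a 3-hypergraph, π a quasigraph in H, and X, Y ⊆ V(H) such that π is anticonnected on both X and Y. If there is a hyperedge h of H intersecting both X and Y such that π(h) ⊆ X or π(h) ⊆ Y (allowing π(h) = ∅), then π is anticonnected on X ∪ Y. -/
open Finset

variable {V : Type*} [DecidableEq V] [Fintype V]

/-- A 3-hypergraph: a set of hyperedges, each of size 2 or 3. -/
structure Hypergraph3 (V : Type*) where
  edges : Finset (Finset V)
  card_edges : ∀ e ∈ edges, e.card = 2 ∨ e.card = 3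

/-- A quasigraph assigns to each hyperedge either a 2-element subset of it or ∅. -/
def IsQuasigraph (H : Hypergraph3 V) (π : Finset V → Finset V) : Prop :=
  ∀ e ∈ H.edges, π e = ∅ ∨ (π e ⊆ e ∧ (π e).card = 2)

/-- A set `f` crosses a partition `R` if it meets at least two classes. -/
def Crosses (f : Finset V) {X : Finset V} (R : Finpartition X) : Prop :=
  ∃ A ∈ R.parts, ∃ B ∈ R.parts, A ≠ B ∧ (f ∩ A).Nonempty ∧ (f ∩ B).Nonempty

/-- `π` is anticonnected on `X` (in `H`): every nontrivial partition of `X` is crossed by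
some hyperedge whose `π`-value is empty or lies in one class. -/
def Anticonnected (H : Hypergraph3 V) (π : Finset V → Finset V) (X : Finset V) : Prop :=
  ∀ R : Finpartition X, R.parts ≠ {X} →
    ∃ f ∈ H.edges, Crosses f R ∧ (π f = ∅ ∨ ∃ C ∈ R.parts, π f ⊆ C)

/-- The graph `π*` on `V` whose edges are the pairs `π e` over used hyperedges `e`. -/
def quasiStar (H : Hypergraph3 V) (π : Finset V → Finset V) : SimpleGraph V :=
  SimpleGraph.fromRel fun u v => ∃ e ∈ H.edges, π e = {u, v}

/-- `π` is connected on `X`: the subgraph of `π*` induced on `X` is connected. -/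
def ConnectedOn (H : Hypergraph3 V) (π : Finset V → Finset V) (X : Finset V) : Prop :=
  ((quasiStar H π).induce (↑X : Set V)).Connected

/-- The hypergraph `H − e`. -/
def Hypergraph3.erase (H : Hypergraph3 V) (e : Finset V) : Hypergraph3 V :=
  ⟨H.edges.erase e, fun f hf => H.card_edges f (Finset.mem_of_mem_erase hf)⟩

namespace Finpartition

theorem exists_inf_eq_of_mem_restrict {α : Type*} [DecidableEq α] [DistribLattice α] [OrderBot α]
    {a b c : α} (P : Finpartition a) (hb : b ≤ a) (hc : c ∈ (P.restrict hb).parts) :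
    ∃ p ∈ P.parts, p ⊓ b = c :=
  mem_image.1 (mem_of_mem_erase hc)

theorem parts_eq_singleton_of_le_mem {α : Type*} [Lattice α] [OrderBot α] {a b : α}
    (P : Finpartition a) (hb : b ∈ P.parts) (hab : a ≤ b) :
    P.parts = {a} := by
  have hba : b = a := le_antisymm (P.le hb) hab
  subst hba
  refine eq_singleton_iff_unique_mem.2 ⟨hb, fun c hc => by_contra fun hcb => P.ne_bot hc ?_⟩
  exact (P.disjoint hc hb hcb).eq_bot_of_le (P.le hc)

end Finpartition

omit [Fintype V] in
theorem Crosses.of_restrict {S X f : Finset V} {R : Finpartition S} (hXS : X ⊆ S)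
    (hf : Crosses f (R.restrict hXS)) : Crosses f R := by
  obtain ⟨_, ha, _, hb, hab, hfa, hfb⟩ := hf
  obtain ⟨A, hA, rfl⟩ := R.exists_inf_eq_of_mem_restrict hXS ha
  obtain ⟨B, hB, rfl⟩ := R.exists_inf_eq_of_mem_restrict hXS hb
  exact ⟨A, hA, B, hB, fun hAB => hab (hAB ▸ rfl),
    hfa.mono (inter_subset_inter_left inter_subset_left),
    hfb.mono (inter_subset_inter_left inter_subset_left)⟩

omit [Fintype V] in
/-- The restriction of `R` to `X` is nontrivial, and its witnesses are witnesses for `R`. -/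
theorem Anticonnected.exists_edge_of_not_subset_part {H : Hypergraph3 V}
    {π : Finset V → Finset V} {X S : Finset V} (hX : Anticonnected H π X)
    (R : Finpartition S) (hXS : X ⊆ S) (hsplit : ¬ ∃ A ∈ R.parts, X ⊆ A) :
    ∃ f ∈ H.edges, Crosses f R ∧ (π f = ∅ ∨ ∃ C ∈ R.parts, π f ⊆ C) := by
  have hnontrivial : (R.restrict hXS).parts ≠ {X} := by
    intro hX1
    obtain ⟨A, hA, hAX⟩ := R.exists_inf_eq_of_mem_restrict hXS (hX1 ▸ mem_singleton_self X)
    exact hsplit ⟨A, hA, hAX ▸ inter_subset_left⟩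
  obtain ⟨f, hf, hcross, hval⟩ := hX _ hnontrivial
  refine ⟨f, hf, hcross.of_restrict hXS, hval.imp_right ?_⟩
  rintro ⟨_, hc, hfc⟩
  obtain ⟨C, hC, rfl⟩ := R.exists_inf_eq_of_mem_restrict hXS hc
  exact ⟨C, hC, hfc.trans inter_subset_left⟩

theorem union_anticonnected_of_hyperedge_general
    (H : Hypergraph3 V) (π : Finset V → Finset V)
    (X Y : Finset V)
    (hX : Anticonnected H π X) (hY : Anticonnected H π Y)
    (h : Finset V) (hh : h ∈ H.edges)
    (hhX : (h ∩ X).Nonempty) (hhY : (h ∩ Y).Nonempty)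
    (hval : π h ⊆ X ∨ π h ⊆ Y) :
    Anticonnected H π (X ∪ Y) := by
  intro R hR
  by_cases hXsplit : ¬ ∃ A ∈ R.parts, X ⊆ A
  · exact hX.exists_edge_of_not_subset_part R subset_union_left hXsplit
  by_cases hYsplit : ¬ ∃ B ∈ R.parts, Y ⊆ B
  · exact hY.exists_edge_of_not_subset_part R subset_union_right hYsplit
  obtain ⟨A, hA, hXA⟩ := not_not.1 hXsplit
  obtain ⟨B, hB, hYB⟩ := not_not.1 hYsplit
  have hAB : A ≠ B := by
    rintro rfl
    exact hR (R.parts_eq_singleton_of_le_mem hA (union_subset hXA hYB))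
  refine ⟨h, hh, ⟨A, hA, B, hB, hAB, hhX.mono (inter_subset_inter_left hXA),
    hhY.mono (inter_subset_inter_left hYB)⟩, Or.inr ?_⟩
  exact hval.elim (fun hvX => ⟨A, hA, hvX.trans hXA⟩) (fun hvY => ⟨B, hB, hvY.trans hYB⟩)

theorem union_anticonnected_of_hyperedge
    (H : Hypergraph3 V) (π : Finset V → Finset V) (hπ : IsQuasigraph H π)
    (X Y : Finset V)
    (hX : Anticonnected H π X) (hY : Anticonnected H π Y)
    (h : Finset V) (hh : h ∈ H.edges)
    (hhX : (h ∩ X).Nonempty) (hhY : (h ∩ Y).Nonempty)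
    (hval : π h ⊆ X ∨ π h ⊆ Y) :
    Anticonnected H π (X ∪ Y) :=
  union_anticonnected_of_hyperedge_general H π X Y hX hY h hh hhX hhY hval
end

section
/- Let π be a quasigraph in a 3-hypergraph H and Y ⊆ X ⊆ V(H). Suppose e is a hyperedge of H not used by π containing vertices u, v ∈ Y, and let ρ = π + (uv)_e. If π is anticonnected on X and ρ is anticonnected on Y, then ρ is anticonnected on X. -/
open Finset

variable {V : Type*} [DecidableEq V] [Fintype V]

/-! Given a nontrivial partition `R` of `X`, if `u` and `v` lie in one class then the edge
found for `R` by the anticonnectivity of `π` still works for `ρ`, since `ρ` differs from `π`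
only at `e`, where `ρ e = {u, v}` lies in that class. Otherwise `R` restricted to `Y` is
nontrivial, and an edge found for the restriction by the anticonnectivity of `ρ` on `Y`
also works for `R`. -/

namespace Finpartition

variable {α : Type*} [DistribLattice α] [OrderBot α] [DecidableEq α] {a b c : α}

theorem mem_restrict_parts (P : Finpartition a) (hb : b ≤ a) :
    c ∈ (P.restrict hb).parts ↔ c ≠ ⊥ ∧ ∃ d ∈ P.parts, d ⊓ b = c := by
  simp [restrict]

theorem restrict_parts_ne_singleton (P : Finpartition a) (hb : b ≤ a) (hc : c ∈ P.parts)
    (hcb : c ⊓ b ≠ ⊥) (hbc : ¬b ≤ c) : (P.restrict hb).parts ≠ {b} := by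
  intro h
  have hmem : c ⊓ b ∈ (P.restrict hb).parts := (P.mem_restrict_parts hb).2 ⟨hcb, c, hc, rfl⟩
  rw [h, Finset.mem_singleton, inf_eq_right] at hmem
  exact hbc hmem

end Finpartition

section

variable {α : Type*} [DecidableEq α]

/-- `Anticonnected H π X` unfolds to: every nontrivial partition of `X` has such an edge. -/
def HasFlatCrossingEdge (H : Hypergraph3 α) (π : Finset α → Finset α) {X : Finset α}
    (R : Finpartition X) : Prop :=
  ∃ f ∈ H.edges, Crosses f R ∧ (π f = ∅ ∨ ∃ C ∈ R.parts, π f ⊆ C)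

theorem Crosses.of_restrict_s4 {f X Y : Finset α} {R : Finpartition X} (hYX : Y ⊆ X)
    (h : Crosses f (R.restrict hYX)) : Crosses f R := by
  obtain ⟨C, hC, D, hD, hCD, hfC, hfD⟩ := h
  obtain ⟨-, A, hA, rfl⟩ := (R.mem_restrict_parts hYX).1 hC
  obtain ⟨-, B, hB, rfl⟩ := (R.mem_restrict_parts hYX).1 hD
  refine ⟨A, hA, B, hB, ?_, ?_, ?_⟩
  · rintro rfl
    exact hCD rfl
  · exact hfC.mono (inter_subset_inter_left inter_subset_left)
  · exact hfD.mono (inter_subset_inter_left inter_subset_left)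

namespace HasFlatCrossingEdge

variable {H : Hypergraph3 α} {π : Finset α → Finset α}

theorem of_restrict_s4 {X Y : Finset α} {R : Finpartition X} (hYX : Y ⊆ X)
    (h : HasFlatCrossingEdge H π (R.restrict hYX)) : HasFlatCrossingEdge H π R := by
  obtain ⟨f, hf, hcross, hflat⟩ := h
  refine ⟨f, hf, hcross.of_restrict_s4 hYX, hflat.imp_right ?_⟩
  rintro ⟨C, hC, hfC⟩
  obtain ⟨-, A, hA, rfl⟩ := (R.mem_restrict_parts hYX).1 hC
  exact ⟨A, hA, hfC.trans inter_subset_left⟩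

theorem update {X A e s : Finset α} {R : Finpartition X} (h : HasFlatCrossingEdge H π R)
    (hA : A ∈ R.parts) (hsA : s ⊆ A) : HasFlatCrossingEdge H (Function.update π e s) R := by
  obtain ⟨f, hf, hcross, hflat⟩ := h
  refine ⟨f, hf, hcross, ?_⟩
  rcases eq_or_ne f e with rfl | hfe
  · exact Or.inr ⟨A, hA, by rwa [Function.update_self]⟩
  · rwa [Function.update_of_ne hfe]

end HasFlatCrossingEdge

end

theorem anticonnected_add_edge_general
    (H : Hypergraph3 V) (π : Finset V → Finset V)
    (X Y : Finset V) (hYX : Y ⊆ X)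
    (e : Finset V)
    (u v : V) (huY : u ∈ Y) (hvY : v ∈ Y)
    (hX : Anticonnected H π X)
    (hY : Anticonnected H (Function.update π e {u, v}) Y) :
    Anticonnected H (Function.update π e {u, v}) X := by
  intro R hR
  obtain ⟨A, hA, huA⟩ := R.exists_mem (hYX huY)
  by_cases hvA : v ∈ A
  · exact HasFlatCrossingEdge.update (hX R hR) hA (insert_subset huA (singleton_subset_iff.2 hvA))
  · have hRY : (R.restrict hYX).parts ≠ {Y} :=
      R.restrict_parts_ne_singleton hYX hA (nonempty_iff_ne_empty.1 ⟨u, mem_inter.2 ⟨huA, huY⟩⟩)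
        fun hYA => hvA (hYA hvY)
    exact HasFlatCrossingEdge.of_restrict_s4 hYX (hY _ hRY)

theorem anticonnected_add_edge
    (H : Hypergraph3 V) (π : Finset V → Finset V) (hπ : IsQuasigraph H π)
    (X Y : Finset V) (hYX : Y ⊆ X)
    (e : Finset V) (he : e ∈ H.edges) (heπ : π e = ∅)
    (u v : V) (hu : u ∈ e) (hv : v ∈ e) (huY : u ∈ Y) (hvY : v ∈ Y) (huv : u ≠ v)
    (hX : Anticonnected H π X)
    (hY : Anticonnected H (Function.update π e {u, v}) Y) :
    Anticonnected H (Function.update π e {u, v}) X :=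
  anticonnected_add_edge_general H π X Y hYX e u v huY hvY hX hY
end

section
/- Let π be a quasigraph in a 3-hypergraph H and let u be a bad leaf for π, incident with hyperedges ua, ub, and ucd with π(ucd) = {u,c}. Let σ be the quasigraph in the switched hypergraph H^(u) obtained by setting σ(uc) = {u,c}, leaving uab and ud unused, and σ(f) = π(f) for all other hyperedges. Then for every X ⊆ V(H): (i) if π is anticonnected on X in H, then σ is anticonnected on X in H^(u); (ii) if π is connected on X, then σ is connected on X. -/
open Finset

variable {V : Type*} [DecidableEq V] [Fintype V]

/-!
Away from `u` nothing changes. At `u`, the only `π*`-edge `uc` is carried by the new hyperedge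
`uc`, so `π* ≤ σ*` and connectedness survives. A partition crossed by `ua` or `ub` is crossed by
the unused `uab`; a partition crossed by `ucd` with `uc` inside a class `C` must separate `d` from
`C ∋ u`, so it is crossed by the unused `ud`.
-/

section

variable {α : Type*} [DecidableEq α]

theorem Crosses.mono {X f g : Finset α} {R : Finpartition X} (hfg : f ⊆ g) (hf : Crosses f R) :
    Crosses g R := by
  obtain ⟨A, hA, B, hB, hAB, hfA, hfB⟩ := hf
  exact ⟨A, hA, B, hB, hAB, hfA.mono (inter_subset_inter_right hfg),
    hfB.mono (inter_subset_inter_right hfg)⟩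

/-- The two classes met by `f` must be `C` and the class of `d`. -/
theorem Crosses.pair_of_subset_insert {X f C : Finset α} {R : Finpartition X} {u d : α}
    (hC : C ∈ R.parts) (hu : u ∈ C) (hf : f ⊆ insert d C) (h : Crosses f R) :
    Crosses {u, d} R := by
  obtain ⟨A, hA, B, hB, hAB, hfA, hfB⟩ := h
  have eq_or_mem : ∀ P ∈ R.parts, (f ∩ P).Nonempty → P = C ∨ d ∈ P := by
    rintro P hP ⟨x, hx⟩
    rw [mem_inter] at hx
    rcases mem_insert.1 (hf hx.1) with rfl | hxC
    · exact Or.inr hx.2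
    · exact Or.inl (R.eq_of_mem_parts hP hC hx.2 hxC)
  have cross {P Q : Finset α} (hP : P ∈ R.parts) (hQ : Q ∈ R.parts) (hPQ : P ≠ Q)
      (hPC : P = C) (hdQ : d ∈ Q) : Crosses {u, d} R :=
    ⟨P, hP, Q, hQ, hPQ, ⟨u, by simp [hPC, hu]⟩, ⟨d, by simp [hdQ]⟩⟩
  rcases eq_or_mem A hA hfA with hAC | hdA <;> rcases eq_or_mem B hB hfB with hBC | hdB
  · exact absurd (hAC.trans hBC.symm) hAB
  · exact cross hA hB hAB hAC hdB
  · exact cross hB hA hAB.symm hBC hdA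
  · exact absurd (R.eq_of_mem_parts hA hB hdA hdB) hAB

theorem quasiStar_le_quasiStar {H H' : Hypergraph3 α} {π σ : Finset α → Finset α}
    (h : ∀ e ∈ H.edges, π e = ∅ ∨ ∃ e' ∈ H'.edges, σ e' = π e) :
    quasiStar H π ≤ quasiStar H' σ := by
  have adj {x y : α} : (∃ e ∈ H.edges, π e = {x, y}) → ∃ e' ∈ H'.edges, σ e' = {x, y} := by
    rintro ⟨e, he, hπe⟩
    rcases h e he with h0 | ⟨e', he', hσe'⟩
    · exact absurd (h0 ▸ hπe).symm (insert_nonempty x {y}).ne_empty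
    · exact ⟨e', he', hσe'.trans hπe⟩
  intro x y hxy
  simp only [quasiStar, SimpleGraph.fromRel_adj] at hxy ⊢
  exact ⟨hxy.1, hxy.2.imp adj adj⟩

theorem ConnectedOn.mono {H H' : Hypergraph3 α} {π σ : Finset α → Finset α} {X : Finset α}
    (hle : quasiStar H π ≤ quasiStar H' σ) (h : ConnectedOn H π X) : ConnectedOn H' σ X :=
  SimpleGraph.Connected.mono (SimpleGraph.comap_monotone _ hle) h

end

/-- `H'` is the switched hypergraph `H^(u)` and `σ` the switched quasigraph. -/
structure BadLeafSwitch {α : Type*} [DecidableEq α] (H H' : Hypergraph3 α)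
    (π σ : Finset α → Finset α) (u a b c d : α) : Prop where
  incident : ∀ f ∈ H.edges, u ∈ f → f = {u, a} ∨ f = {u, b} ∨ f = {u, c, d}
  π_ua : π {u, a} = ∅
  π_ub : π {u, b} = ∅
  π_ucd : π {u, c, d} = {u, c}
  edges_eq : H'.edges =
    (H.edges \ {{u, a}, {u, b}, {u, c, d}}) ∪ {{u, a, b}, {u, c}, {u, d}}
  σ_uc : σ {u, c} = {u, c}
  σ_uab : σ {u, a, b} = ∅
  σ_ud : σ {u, d} = ∅
  σ_eq : ∀ f, f ∉ ({{u, a}, {u, b}, {u, c, d}, {u, a, b}, {u, c}, {u, d}} : Finset (Finset α)) →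
    σ f = π f

namespace BadLeafSwitch

variable {α : Type*} [DecidableEq α] {H H' : Hypergraph3 α} {π σ : Finset α → Finset α}
  {u a b c d : α}

theorem mem_edges_and_eq_of_not_mem (hs : BadLeafSwitch H H' π σ u a b c d) {f : Finset α}
    (hf : f ∈ H.edges) (hkept : f ∉ ({{u, a}, {u, b}, {u, c, d}} : Finset (Finset α))) :
    f ∈ H'.edges ∧ σ f = π f := by
  refine ⟨hs.edges_eq ▸ mem_union_left _ (mem_sdiff.2 ⟨hf, hkept⟩),
    hs.σ_eq f fun hmem => hkept ?_⟩
  -- the three new hyperedges contain `u`, and `u` lies only in the three removed ones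
  have hu : u ∈ f ∨ f ∈ ({{u, a}, {u, b}, {u, c, d}} : Finset (Finset α)) := by
    simp only [mem_insert, mem_singleton] at hmem
    rcases hmem with h | h | h | h | h | h <;> simp [h]
  rcases hu with hu | h
  · simpa using hs.incident f hf hu
  · exact h

theorem quasiStar_le (hs : BadLeafSwitch H H' π σ u a b c d) :
    quasiStar H π ≤ quasiStar H' σ := by
  refine quasiStar_le_quasiStar fun e he => ?_
  by_cases hremoved : e ∈ ({{u, a}, {u, b}, {u, c, d}} : Finset (Finset α))
  · simp only [mem_insert, mem_singleton] at hremoved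
    rcases hremoved with rfl | rfl | rfl
    · exact Or.inl hs.π_ua
    · exact Or.inl hs.π_ub
    · exact Or.inr ⟨{u, c}, by simp [hs.edges_eq], hs.σ_uc.trans hs.π_ucd.symm⟩
  · obtain ⟨he', hσe⟩ := hs.mem_edges_and_eq_of_not_mem he hremoved
    exact Or.inr ⟨e, he', hσe⟩

theorem anticonnected (hs : BadLeafSwitch H H' π σ u a b c d) {X : Finset α}
    (h : Anticonnected H π X) : Anticonnected H' σ X := by
  intro R hR
  obtain ⟨f, hf, hcross, hπf⟩ := h R hR
  have huab : ({u, a, b} : Finset α) ∈ H'.edges := by simp [hs.edges_eq]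
  by_cases hremoved : f ∈ ({{u, a}, {u, b}, {u, c, d}} : Finset (Finset α))
  · simp only [mem_insert, mem_singleton] at hremoved
    rcases hremoved with rfl | rfl | rfl
    · exact ⟨{u, a, b}, huab, hcross.mono (by simp [insert_subset_iff]), Or.inl hs.σ_uab⟩
    · exact ⟨{u, a, b}, huab, hcross.mono (by simp [insert_subset_iff]), Or.inl hs.σ_uab⟩
    · rw [hs.π_ucd] at hπf
      obtain ⟨C, hC, hucC⟩ := hπf.resolve_left (insert_nonempty u {c}).ne_empty
      have hsub : ({u, c, d} : Finset α) ⊆ insert d C := by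
        simp only [insert_subset_iff, singleton_subset_iff] at hucC ⊢
        simp [hucC]
      exact ⟨{u, d}, by simp [hs.edges_eq], hcross.pair_of_subset_insert hC (hucC (by simp)) hsub,
        Or.inl hs.σ_ud⟩
  · obtain ⟨hf', hσf⟩ := hs.mem_edges_and_eq_of_not_mem hf hremoved
    exact ⟨f, hf', hcross, hσf ▸ hπf⟩

end BadLeafSwitch

theorem switch_preserves_general
    (H H' : Hypergraph3 V) (π σ : Finset V → Finset V)
    (u a b c d : V)
    -- u is a bad leaf: it is incident with exactly the hyperedges ua, ub, ucd,
    -- and the only π*-edge at u is π(ucd) = uc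
    (hinc : ∀ f ∈ H.edges, u ∈ f → f = {u, a} ∨ f = {u, b} ∨ f = {u, c, d})
    (hπa : π {u, a} = ∅) (hπb : π {u, b} = ∅) (hπcd : π ({u, c, d} : Finset V) = {u, c})
    -- the switched hypergraph H^(u)
    (hH' : H'.edges =
      (H.edges \ {({u, a} : Finset V), {u, b}, {u, c, d}}) ∪
        {({u, a, b} : Finset V), {u, c}, {u, d}})
    -- the switched quasigraph σ
    (hσ1 : σ ({u, c} : Finset V) = {u, c}) (hσ2 : σ ({u, a, b} : Finset V) = ∅)
    (hσ3 : σ ({u, d} : Finset V) = ∅)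
    (hσ : ∀ f : Finset V,
      f ∉ ({({u, a} : Finset V), {u, b}, {u, c, d}, {u, a, b}, {u, c}, {u, d}} :
        Finset (Finset V)) → σ f = π f)
    (X : Finset V) :
    (Anticonnected H π X → Anticonnected H' σ X) ∧
      (ConnectedOn H π X → ConnectedOn H' σ X) := by
  have hs : BadLeafSwitch H H' π σ u a b c d :=
    ⟨hinc, hπa, hπb, hπcd, hH', hσ1, hσ2, hσ3, hσ⟩
  exact ⟨hs.anticonnected, ConnectedOn.mono hs.quasiStar_le⟩

theorem switch_preserves
    (H H' : Hypergraph3 V) (π σ : Finset V → Finset V)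
    (hπ : IsQuasigraph H π) (hσq : IsQuasigraph H' σ)
    (u a b c d : V)
    (hua : u ≠ a) (hub : u ≠ b) (huc : u ≠ c) (hud : u ≠ d)
    (hab : a ≠ b) (hcd : c ≠ d)
    -- u is a bad leaf: it is incident with exactly the hyperedges ua, ub, ucd,
    -- and the only π*-edge at u is π(ucd) = uc
    (hea : ({u, a} : Finset V) ∈ H.edges) (heb : ({u, b} : Finset V) ∈ H.edges)
    (hecd : ({u, c, d} : Finset V) ∈ H.edges)
    (hinc : ∀ f ∈ H.edges, u ∈ f → f = {u, a} ∨ f = {u, b} ∨ f = {u, c, d})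
    (hπa : π {u, a} = ∅) (hπb : π {u, b} = ∅) (hπcd : π ({u, c, d} : Finset V) = {u, c})
    -- the switched hypergraph H^(u)
    (hH' : H'.edges =
      (H.edges \ {({u, a} : Finset V), {u, b}, {u, c, d}}) ∪
        {({u, a, b} : Finset V), {u, c}, {u, d}})
    -- the switched quasigraph σ
    (hσ1 : σ ({u, c} : Finset V) = {u, c}) (hσ2 : σ ({u, a, b} : Finset V) = ∅)
    (hσ3 : σ ({u, d} : Finset V) = ∅)
    (hσ : ∀ f : Finset V,
      f ∉ ({({u, a} : Finset V), {u, b}, {u, c, d}, {u, a, b}, {u, c}, {u, d}} :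
        Finset (Finset V)) → σ f = π f)
    (X : Finset V) :
    (Anticonnected H π X → Anticonnected H' σ X) ∧
      (ConnectedOn H π X → ConnectedOn H' σ X) :=
  switch_preserves_general H H' π σ u a b c d hinc hπa hπb hπcd hH' hσ1 hσ2 hσ3 hσ X
end
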